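/- Let k ≥ 2 and let a, b ∈ ℕ satisfy a ≥ k, b > k, and suppose the two-letter word (a.b) is a factor of W_N^{(k)} for some N ∈ ℕ. Then for all n ∈ ℕ, c^{(k)}((a.b); n) = Σ_{i=max(n−k+1,0)}^{n−1} c^{(k)}((a.b); i) + c^{(k)}((a−k . b−k); n−k), where the last term is interpreted as 0 when n < k. -/

import Mathlib

/-- Image of a single letter `m = k*i + j` under the k-Bonacci morphism `φ_k` over ℕ:
`φ_k(ki+j) = (ki)(ki+j+1)` for `0 ≤ j ≤ k-2`, and `φ_k(ki+(k-1)) = ki+k`. -/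
def phiLetter (k m : ℕ) : List ℕ :=
  if m % k = k - 1 then [m + 1] else [k * (m / k), m + 1]

/-- The morphism `φ_k`, extended to words by concatenation. -/
def phi (k : ℕ) (w : List ℕ) : List ℕ := (w.map (phiLetter k)).flatten

/-- `W k n = φ_k^n(0)`, the n-th iterate of `φ_k` applied to the one-letter word `0`. -/
def W (k n : ℕ) : List ℕ := (phi k)^[n] [0]

/-- `shift n w = n ⊕ w`, adding `n` to every letter. -/
def shift (n : ℕ) (w : List ℕ) : List ℕ := w.map (· + n)

/-- `occ B w = |w|_B`, the number of (possibly overlapping) occurrences of `B`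
as a factor of `w`, i.e. the number of positions `i` at which `B` is a prefix
of the suffix of `w` starting at `i`. -/
def occ (B w : List ℕ) : ℕ :=
  ((List.range (w.length + 1)).filter (fun i => decide (B <+: w.drop i))).length

/-- `C k B = C_B^{(k)}(y) = Σ_{n≥0} |W_n^{(k)}|_B yⁿ` as a formal power series over ℚ. -/
noncomputable def C (k : ℕ) (B : List ℕ) : PowerSeries ℚ :=
  PowerSeries.mk (fun n => (occ B (W k n) : ℚ))

/-- `Hgf r = H_r(y)`, the multiplicative inverse of `1 - y - y² - ⋯ - y^r`. -/
noncomputable def Hgf (r : ℕ) : PowerSeries ℚ :=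
  (1 - ∑ j ∈ Finset.Icc 1 r, (PowerSeries.X : PowerSeries ℚ) ^ j)⁻¹

/-- `Ggf r = G_r(y) = (1 - y^r)·H_r(y) - 1`. -/
noncomputable def Ggf (r : ℕ) : PowerSeries ℚ :=
  (1 - (PowerSeries.X : PowerSeries ℚ) ^ r) * Hgf r - 1

/-- The set `B^{(k)} = B_1^{(k)} ∪ B_2^{(k)} ∪ B_3^{(k)}` of length-2 words. -/
def Bset (k : ℕ) : Set (List ℕ) :=
  {U | (∃ i a : ℕ, 1 ≤ a ∧ U = [a + k * i, k + k * i]) ∨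
       (∃ i b : ℕ, 1 ≤ b ∧ b ≤ k - 1 ∧ U = [k * i, b + k * i]) ∨
       (∃ a : ℕ, 1 ≤ a ∧ U = [a, 0])}

/-- The list of blocks in the decomposition of `W_n^{(k)}` for `n ≥ k`:
`W_{n-1}, …, W_{n-k+1}, k ⊕ W_{n-k}`. -/
def blocks (k n : ℕ) : List (List ℕ) :=
  (List.range (k - 1)).map (fun j => W k (n - 1 - j)) ++ [shift k (W k (n - k))]


lemma phi_append (k : ℕ) (u v : List ℕ) : phi k (u ++ v) = phi k u ++ phi k v := by
  simp [phi]

lemma phi_flatten (k : ℕ) (L : List (List ℕ)) :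
    phi k L.flatten = (L.map (phi k)).flatten := by
  induction L with
  | nil => simp [phi]
  | cons w L' ih => rw [List.flatten_cons, phi_append, ih]; simp

lemma W_succ (k n : ℕ) : W k (n + 1) = phi k (W k n) := by
  simp [W, Function.iterate_succ_apply']

lemma map_W_succ (k r m : ℕ) (h : r ≤ m) :
    (List.map (fun j => W k (m - 1 - j)) (List.range r)).map (phi k)
      = List.map (fun j => W k (m - j)) (List.range r) := by
  rw [List.map_map]
  apply List.map_congr_left
  intro j hj
  simp only [List.mem_range] at hj
  show phi k (W k (m - 1 - j)) = W k (m - j)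
  rw [← W_succ]
  congr 1
  omega

lemma phiLetter_shift (k m : ℕ) (hk : 0 < k) :
    phiLetter k (m + k) = shift k (phiLetter k m) := by
  unfold phiLetter shift
  rw [Nat.add_mod_right, Nat.add_div_right _ hk]
  split <;> simp [Nat.mul_add] <;> ring

lemma phi_shift (k : ℕ) (hk : 0 < k) (w : List ℕ) :
    phi k (shift k w) = shift k (phi k w) := by
  induction w with
  | nil => simp [phi, shift]
  | cons x t ih =>
    show phi k (shift k (([x] : List ℕ) ++ t)) = shift k (phi k (([x]:List ℕ) ++ t))
    rw [show shift k ([x] ++ t) = shift k [x] ++ shift k t by simp [shift],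
      phi_append, phi_append, ih]
    have : phi k (shift k [x]) = shift k (phi k [x]) := by
      simp [phi, shift, phiLetter_shift k x hk]
    rw [this]
    simp [shift]

lemma occ_cons (B : List ℕ) (x : ℕ) (w : List ℕ) :
    occ B (x :: w) = (if B <+: (x :: w) then 1 else 0) + occ B w := by
  unfold occ
  rw [show (x :: w).length + 1 = (w.length + 1) + 1 from rfl,
    List.range_succ_eq_map]
  rw [List.filter_cons]
  have hmap : (List.map Nat.succ (List.range (w.length + 1))).filter
      (fun i => decide (B <+: (x :: w).drop i))
      = List.map Nat.succ ((List.range (w.length + 1)).filter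
        ((fun i => decide (B <+: (x :: w).drop i)) ∘ Nat.succ)) :=
    List.filter_map
  simp only [hmap]
  have : ((fun i => decide (B <+: (x :: w).drop i)) ∘ Nat.succ)
      = fun i => decide (B <+: w.drop i) := by
    funext i; simp
  rw [this]
  by_cases h : B <+: (x :: w) <;> simp [h] <;> omega

lemma occ_nil (B : List ℕ) (hB : B ≠ []) : occ B [] = 0 := by
  unfold occ
  simp [List.range_succ, List.prefix_iff_eq_take]
  intro h; exact absurd h.symm (by simpa using hB)

lemma pair_prefix_iff (a b : ℕ) (l : List ℕ) :
    [a, b] <+: l ↔ ∃ t, l = a :: b :: t := by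
  constructor
  · rintro ⟨t, rfl⟩; exact ⟨t, rfl⟩
  · rintro ⟨t, rfl⟩; exact ⟨t, rfl⟩

lemma occ_pair_append (a b : ℕ) (u v : List ℕ)
    (h : ∀ x, v.head? = some x → x ≠ b) :
    occ [a, b] (u ++ v) = occ [a, b] u + occ [a, b] v := by
  induction u with
  | nil => simp [occ_nil]
  | cons x u' ih =>
    rw [List.cons_append, occ_cons, occ_cons, ih]
    have hiff : ([a, b] <+: x :: (u' ++ v)) ↔ ([a, b] <+: x :: u') := by
      rw [pair_prefix_iff, pair_prefix_iff]
      cases u' with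
      | nil =>
        simp only [List.nil_append]
        constructor
        · rintro ⟨t, ht⟩
          simp only [List.cons.injEq] at ht
          exact absurd rfl (h b (by rw [ht.2]; rfl))
        · rintro ⟨t, ht⟩; simp at ht
      | cons y u'' =>
        constructor
        · rintro ⟨t, ht⟩
          simp only [List.cons_append, List.cons.injEq] at ht
          exact ⟨u'', by simp [ht.1, ht.2.1]⟩
        · rintro ⟨t, ht⟩
          simp only [List.cons.injEq] at ht
          exact ⟨u'' ++ v, by simp [ht.1, ht.2.1]⟩
    simp only [hiff]
    omega

lemma occ_pair_flatten (a b : ℕ) (L : List (List ℕ))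
    (h : ∀ w ∈ L, ∀ x, w.head? = some x → x ≠ b) :
    occ [a, b] L.flatten = (L.map (occ [a, b])).sum := by
  induction L with
  | nil => simp [occ_nil]
  | cons w L' ih =>
    rw [List.flatten_cons, occ_pair_append a b w L'.flatten, List.map_cons, List.sum_cons,
      ih (fun w hw => h w (by simp [hw]))]
    intro x hx
    have : ∃ w' ∈ L', w'.head? = some x := by
      clear ih h
      induction L' with
      | nil => simp at hx
      | cons u L'' ih2 =>
        rw [List.flatten_cons, List.head?_append] at hx
        rcases hu : u.head? with _ | y
        · rw [hu] at hx; simp at hx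
          obtain ⟨w', hw', h2⟩ := ih2 hx
          exact ⟨w', by simp [hw'], h2⟩
        · rw [hu] at hx; simp at hx
          exact ⟨u, by simp, by rw [hu, hx]⟩
    obtain ⟨w', hw', h2⟩ := this
    exact h w' (by simp [hw']) x h2

lemma occ_shift (a b k : ℕ) (ha : k ≤ a) (hb : k ≤ b) (w : List ℕ) :
    occ [a, b] (shift k w) = occ [a - k, b - k] w := by
  unfold occ shift
  rw [List.length_map]
  congr 1
  apply List.filter_congr
  intro i _
  simp only [decide_eq_decide, ← List.map_drop]
  rw [pair_prefix_iff, pair_prefix_iff]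
  constructor
  · rintro ⟨t, ht⟩
    rcases hd : w.drop i with _ | ⟨x, _ | ⟨y, t''⟩⟩
    · rw [hd] at ht; simp at ht
    · rw [hd] at ht; simp at ht
    · rw [hd] at ht
      simp only [List.map_cons, List.cons.injEq] at ht
      refine ⟨t'', ?_⟩
      rw [show x = a - k by omega, show y = b - k by omega]
  · rintro ⟨t, ht⟩
    refine ⟨t.map (· + k), ?_⟩
    rw [ht]
    simp
    omega

lemma W_letters_le (k n : ℕ) : ∀ m ∈ W k n, m ≤ n := by
  induction n with
  | zero => simp [W]
  | succ n ih =>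
    rw [W_succ]
    intro m hm
    simp only [phi, List.mem_flatten, List.mem_map] at hm
    obtain ⟨l, ⟨x, hx, rfl⟩, hml⟩ := hm
    have hx' : x ≤ n := ih x hx
    unfold phiLetter at hml
    split at hml <;> simp at hml
    · omega
    · rcases hml with h1 | h1
      · have h2 := Nat.div_mul_le_self x k
        have h3 : k * (x / k) = (x / k) * k := Nat.mul_comm _ _
        omega
      · omega

lemma occ_W_eq_zero (k a b n : ℕ) (ha : n < a) : occ [a, b] (W k n) = 0 := by
  have hmem : a ∉ W k n := fun h => absurd (W_letters_le k n a h) (by omega)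
  generalize W k n = w at *
  induction w with
  | nil => exact occ_nil _ (by simp)
  | cons x t ih =>
    rw [occ_cons]
    have hx : ¬ ([a, b] <+: x :: t) := by
      rw [pair_prefix_iff]
      rintro ⟨u, hu⟩
      simp only [List.cons.injEq] at hu
      exact hmem (by simp [hu.1])
    rw [if_neg hx, ih (fun h => hmem (by simp [h]))]

lemma W_head (k n : ℕ) (hk : 2 ≤ k) : (W k n).head? = some 0 := by
  induction n with
  | zero => rfl
  | succ n ih =>
    rw [W_succ]
    cases hw : W k n with
    | nil => rw [hw] at ih; simp at ih
    | cons x t =>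
      rw [hw] at ih; simp at ih; subst ih
      show (phi k (([0]:List ℕ) ++ t)).head? = some 0
      rw [phi_append, List.head?_append]
      have h0 : phi k [0] = [k * (0 / k), 1] := by
        have : ¬ (0 % k = k - 1) := by rw [Nat.zero_mod]; omega
        simp [phi, phiLetter, this]
        omega
      rw [h0]
      simp

lemma W_small (k n : ℕ) (hn : n < k) :
    W k n = ((List.range n).map (fun j => W k (n - 1 - j))).flatten ++ [n] := by
  induction n with
  | zero => simp [W]
  | succ n ih =>
    have hn' : n < k := by omega
    rw [W_succ, ih hn', phi_append, phi_flatten, map_W_succ k n n le_rfl]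
    have h2 : phi k [n] = [0] ++ [n + 1] := by
      have hmod : n % k = n := Nat.mod_eq_of_lt hn'
      have hne : n ≠ k - 1 := by omega
      simp [phi, phiLetter, hmod, hne, Nat.div_eq_of_lt hn']
    rw [h2]
    rw [List.range_succ, List.map_append, List.flatten_append]
    simp only [Nat.add_sub_cancel, Nat.sub_self, List.map_cons, List.map_nil]
    rw [show W k 0 = [0] from rfl]
    simp [List.append_assoc]

lemma W_decomp (k n : ℕ) (hk : 2 ≤ k) (hn : k ≤ n) :
    W k n = ((List.range (k - 1)).map (fun j => W k (n - 1 - j))).flatten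
      ++ shift k (W k (n - k)) := by
  induction n with
  | zero => omega
  | succ n ih =>
    rcases Nat.eq_or_lt_of_le hn with heq | hlt
    · have hkn : k - 1 = n := by omega
      rw [W_succ, W_small k n (by omega), phi_append, phi_flatten,
        map_W_succ k n n le_rfl]
      have h2 : phi k [n] = [k] := by
        have hmod : n % k = k - 1 := by rw [Nat.mod_eq_of_lt (by omega)]; omega
        simp [phi, phiLetter, hmod]
        omega
      have h3 : shift k (W k (n + 1 - k)) = [k] := by
        rw [show n + 1 - k = 0 by omega]
        simp [W, shift]
      rw [h2, h3, hkn]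
      simp only [Nat.add_sub_cancel]
    · have hn' : k ≤ n := by omega
      rw [W_succ, ih hn', phi_append, phi_flatten,
        map_W_succ k (k - 1) n (by omega), phi_shift k (by omega), ← W_succ]
      have h4 : n - k + 1 = n + 1 - k := by omega
      rw [h4]
      simp only [Nat.add_sub_cancel]

lemma list_sum_range (f : ℕ → ℕ) (r : ℕ) :
    ((List.range r).map f).sum = ∑ j ∈ Finset.range r, f j := by
  induction r with
  | zero => simp
  | succ r ih =>
    rw [List.range_succ, List.map_append, List.sum_append, Finset.sum_range_succ, ih]
    simp

theorem stmt18 (k a b N : ℕ) (hk : 2 ≤ k) (ha : k ≤ a) (hb : k < b)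
    (hfac : [a, b] <:+: W k N) (n : ℕ) :
    occ [a, b] (W k n) =
      (∑ i ∈ Finset.Ico (n + 1 - k) n, occ [a, b] (W k i))
      + (if k ≤ n then occ [a - k, b - k] (W k (n - k)) else 0) := by
  by_cases hn : k ≤ n
  · rw [if_pos hn, W_decomp k n hk hn]
    rw [occ_pair_append a b _ _ (by
      intro x hx
      rw [shift] at hx
      rcases hw : (W k (n-k)).head? with _ | y
      · rw [List.head?_map, hw] at hx; simp at hx
      · rw [List.head?_map, hw] at hx
        simp only [Option.map_some, Option.some.injEq] at hx
        have := W_head k (n - k) hk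
        rw [hw] at this; simp at this
        omega)]
    rw [occ_shift a b k ha (by omega)]
    congr 1
    rw [occ_pair_flatten a b _ (by
      intro w hw x hx
      simp only [List.mem_map, List.mem_range] at hw
      obtain ⟨j, hj, rfl⟩ := hw
      rw [W_head k _ hk] at hx
      simp at hx
      omega)]
    rw [List.map_map, list_sum_range]
    apply Finset.sum_nbij' (fun j => n - 1 - j) (fun i => n - 1 - i)
    · intro j hj; simp only [Finset.mem_range] at hj; simp only [Finset.mem_Ico]; omega
    · intro i hi; simp only [Finset.mem_Ico] at hi; simp only [Finset.mem_range]; omega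
    · intro j hj; simp only [Finset.mem_range] at hj; omega
    · intro i hi; simp only [Finset.mem_Ico] at hi; omega
    · intro j hj; rfl
  · rw [if_neg hn, add_zero, occ_W_eq_zero k a b n (by omega)]
    symm
    apply Finset.sum_eq_zero
    intro i hi
    simp only [Finset.mem_Ico] at hi
    exact occ_W_eq_zero k a b i (by omega)
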